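/- For any d-dimensional regular vine V and any starting index i_1 ∈ {1, ..., d}, there exists at least one permutation (i_1, i_2, ..., i_d) of (1, ..., d) that is compatible with V. Consequently, every d-dimensional vine admits at least d compatible permutations. -/

import Mathlib

open Finset

variable {α : Type*} [DecidableEq α] [Fintype α]

/-- The simple graph on `α` induced by a finite set of unordered pairs. -/
def graphOf (E : Finset (Sym2 α)) : SimpleGraph α where
  Adj x y := x ≠ y ∧ s(x, y) ∈ E
  symm := ⟨by
    intro x y h
    refine ⟨h.1.symm, ?_⟩
    rw [Sym2.eq_swap]
    exact h.2⟩
  loopless := ⟨fun x h => h.1 rfl⟩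

/-- `(V, E)` is a finite tree: edges join distinct vertices of `V`, the induced
graph is acyclic, and all vertices of `V` are mutually reachable. -/
def IsTreeOn (V : Finset α) (E : Finset (Sym2 α)) : Prop :=
  (∀ e ∈ E, ∀ x ∈ e, x ∈ V) ∧ (∀ e ∈ E, ¬ e.IsDiag) ∧
    (graphOf E).IsAcyclic ∧ ∀ x ∈ V, ∀ y ∈ V, (graphOf E).Reachable x y

/-- Complete union of an edge: the union of the complete unions of its endpoints
(each vertex of a tree of the vine is identified with its complete union). -/
def eUnion (e : Sym2 (Finset α)) : Finset α :=
  Sym2.lift ⟨fun A B => A ∪ B, fun A B => union_comm A B⟩ e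

/-- Conditioning set `D_e` of an edge. -/
def condSet (e : Sym2 (Finset α)) : Finset α :=
  Sym2.lift ⟨fun A B => A ∩ B, fun A B => inter_comm A B⟩ e

/-- Conditioned set `{a_e, b_e}` of an edge. -/
def condPair (e : Sym2 (Finset α)) : Finset α :=
  Sym2.lift ⟨fun A B => symmDiff A B, fun A B => symmDiff_comm A B⟩ e

/-- A regular vine on a finite set `α` of `d = Fintype.card α` elements.  The
vertices of tree `k` (for `k = 1, …, d-1`) are identified with their complete
unions, subsets of `α`; `V (k+1) = E k` is expressed via complete unions. -/
structure RegularVine (α : Type*) [DecidableEq α] [Fintype α] where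
  V : ℕ → Finset (Finset α)
  E : ℕ → Finset (Sym2 (Finset α))
  hV1 : V 1 = Finset.univ.image (fun a : α => ({a} : Finset α))
  hVsucc : ∀ k, 1 ≤ k → V (k + 1) = (E k).image eUnion
  tree : ∀ k, 1 ≤ k → k + 1 ≤ Fintype.card α → IsTreeOn (V k) (E k)
  hEzero : ∀ k, k = 0 ∨ Fintype.card α ≤ k → E k = ∅
  proximity : ∀ k, 1 ≤ k → ∀ p ∈ E (k + 1),
    ∃ a ∈ E k, ∃ b ∈ E k, p = s(eUnion a, eUnion b) ∧ ∃ v, v ∈ a ∧ v ∈ b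

/-- A tree `(V, E)` is a path: it is a tree and every vertex has degree at most 2. -/
def IsPathOn (V : Finset α) (E : Finset (Sym2 α)) : Prop :=
  IsTreeOn V E ∧ ∀ v ∈ V, (E.filter (fun e => v ∈ e)).card ≤ 2

/-- A permutation `(i_1, …, i_d) = (σ 0, …, σ (d-1))` is compatible with a vine on
`Fin d`: for every `k` there is an edge of tree `k` with conditioned set
`{σ k, σ r}` (some `r < k`) and conditioning set `{σ 0, …, σ (k-1)} \ {σ r}`. -/
def Compatible {d : ℕ} (𝒱 : RegularVine (Fin d)) (σ : Fin d → Fin d) : Prop :=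
  ∀ k : Fin d, 1 ≤ (k : ℕ) → ∃ r : Fin d, r < k ∧ ∃ e ∈ 𝒱.E (k : ℕ),
    condPair e = {σ k, σ r} ∧
    condSet e = ((Finset.univ.filter (fun s : Fin d => s < k)).image σ).erase (σ r)


/-!
Build the permutation greedily from `{i₁}`. Every vertex of tree `k` has exactly `k` elements:
the endpoints of an edge are distinct `k`-sets which, by the proximity condition, share a
`(k-1)`-set. The vertices of tree `k < d` cover all indices, so a vertex `S = {i_1, …, i_k}` is
not alone in its tree and has a neighbour `X`. As `S ∪ X` has `k + 1` elements, `X \ S = {j}` and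
`S \ X = {a}`; the edge `{S, X}` has conditioned set `{j, a}` and conditioning set `S \ {a}`,
which is the compatibility condition for `i_{k+1} = j`, and `S ∪ {j}` is a vertex of tree `k + 1`.
Distinct starting indices give distinct permutations.
-/

section

variable {β : Type*} [DecidableEq β] {s t u : Finset β} {n : ℕ}

theorem card_union_eq_succ_of_ne (hst : s ≠ t) (hs : #s = n) (ht : #t = n)
    (hus : u ⊆ s) (hut : u ⊆ t) (hu : n ≤ #u + 1) : #(s ∪ t) = n + 1 := by
  have hinter_lt : #(s ∩ t) < n := by
    refine lt_of_le_of_ne (hs ▸ card_le_card inter_subset_left) fun h => hst ?_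
    have hsub : s ⊆ t :=
      (eq_of_subset_of_card_le inter_subset_left (by rw [hs, h])) ▸ inter_subset_right
    exact eq_of_subset_of_card_le hsub (by omega)
  have hinter_ge : #u ≤ #(s ∩ t) := card_le_card (subset_inter hus hut)
  have := card_union_add_card_inter s t
  omega

theorem exists_sdiff_eq_singleton_of_card_union (hs : #s = n) (ht : #t = n)
    (hst : #(s ∪ t) = n + 1) : ∃ j a, t \ s = {j} ∧ s \ t = {a} := by
  have hts := card_sdiff_add_card t s
  have hst' := card_sdiff_add_card s t
  rw [union_comm] at hts
  obtain ⟨j, hj⟩ := card_eq_one.mp (show #(t \ s) = 1 by omega)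
  obtain ⟨a, ha⟩ := card_eq_one.mp (show #(s \ t) = 1 by omega)
  exact ⟨j, a, hj, ha⟩

@[simp] theorem eUnion_mk (A B : Finset β) : eUnion s(A, B) = A ∪ B := rfl

theorem subset_eUnion_of_mem {A : Finset β} {e : Sym2 (Finset β)} (h : A ∈ e) :
    A ⊆ eUnion e := by
  obtain ⟨B, rfl⟩ := Sym2.mem_iff_exists.mp h
  exact subset_union_left

@[simp] theorem condSet_mk (A B : Finset β) : condSet s(A, B) = A ∩ B := rfl

end

@[simp] theorem condPair_mk (A B : Finset α) : condPair s(A, B) = symmDiff A B := rfl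

namespace RegularVine

variable {𝒱 : RegularVine α} {k : ℕ} {A B : Finset α} {e : Sym2 (Finset α)}

theorem pos_of_mem_E (he : e ∈ 𝒱.E k) : 1 ≤ k := by
  by_contra h
  simp [𝒱.hEzero k (Or.inl (by omega))] at he

theorem lt_card_of_mem_E (he : e ∈ 𝒱.E k) : k < Fintype.card α := by
  by_contra h
  simp [𝒱.hEzero k (Or.inr (by omega))] at he

theorem isTreeOn_of_mem_E (he : e ∈ 𝒱.E k) : IsTreeOn (𝒱.V k) (𝒱.E k) :=
  𝒱.tree k (pos_of_mem_E he) (lt_card_of_mem_E he)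

theorem mem_V_of_mem_E (he : e ∈ 𝒱.E k) (hA : A ∈ e) : A ∈ 𝒱.V k :=
  (isTreeOn_of_mem_E he).1 e he A hA

theorem ne_of_mk_mem_E (he : s(A, B) ∈ 𝒱.E k) : A ≠ B := fun h =>
  (isTreeOn_of_mem_E he).2.1 _ he (Sym2.mk_isDiag_iff.mpr h)

theorem mem_V_succ (hk : 1 ≤ k) (he : e ∈ 𝒱.E k) : eUnion e ∈ 𝒱.V (k + 1) := by
  rw [𝒱.hVsucc k hk]
  exact mem_image_of_mem _ he

theorem exists_common_subset_of_mk_mem_E (he : s(A, B) ∈ 𝒱.E (k + 1)) (hk : 1 ≤ k) :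
    ∃ v ∈ 𝒱.V k, v ⊆ A ∧ v ⊆ B := by
  obtain ⟨a, ha, b, -, hab, v, hva, hvb⟩ := 𝒱.proximity k hk _ he
  refine ⟨v, mem_V_of_mem_E ha hva, ?_⟩
  have hvA := subset_eUnion_of_mem hva
  have hvB := subset_eUnion_of_mem hvb
  rcases Sym2.eq_iff.mp hab with ⟨rfl, rfl⟩ | ⟨rfl, rfl⟩
  exacts [⟨hvA, hvB⟩, ⟨hvB, hvA⟩]

theorem card_of_mem_V (hk : 1 ≤ k) (hA : A ∈ 𝒱.V k) : #A = k := by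
  induction k using Nat.strong_induction_on generalizing A with
  | _ k ih =>
  obtain _ | _ | m := k
  · omega
  · rw [𝒱.hV1] at hA
    obtain ⟨a, -, rfl⟩ := mem_image.mp hA
    exact card_singleton a
  rw [𝒱.hVsucc (m + 1) (by omega)] at hA
  obtain ⟨e, he, rfl⟩ := mem_image.mp hA
  induction e using Sym2.ind with
  | _ P Q =>
  have hP := ih (m + 1) (by omega) le_add_self (mem_V_of_mem_E he (Sym2.mem_mk_left P Q))
  have hQ := ih (m + 1) (by omega) le_add_self (mem_V_of_mem_E he (Sym2.mem_mk_right P Q))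
  -- in tree 1 the empty set plays the role of the shared vertex
  obtain ⟨v, hvP, hvQ, hv⟩ : ∃ v, v ⊆ P ∧ v ⊆ Q ∧ m + 1 ≤ #v + 1 := by
    obtain _ | l := m
    · exact ⟨∅, empty_subset P, empty_subset Q, by simp⟩
    obtain ⟨v, hv, hvP, hvQ⟩ := exists_common_subset_of_mk_mem_E he le_add_self
    exact ⟨v, hvP, hvQ, (ih (l + 1) (by omega) le_add_self hv).symm ▸ le_rfl⟩
  exact card_union_eq_succ_of_ne (ne_of_mk_mem_E he) hP hQ hvP hvQ hv

theorem exists_mk_mem_E_of_cover (hk : 1 ≤ k) (hkd : k < Fintype.card α)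
    (hcover : ∀ j : α, ∃ T ∈ 𝒱.V k, j ∈ T) (hA : A ∈ 𝒱.V k) : ∃ X, s(A, X) ∈ 𝒱.E k := by
  obtain ⟨j, -, hj⟩ := exists_mem_notMem_of_card_lt_card (s := A) (t := univ)
    (by rwa [card_univ, card_of_mem_V hk hA])
  obtain ⟨T, hT, hjT⟩ := hcover j
  obtain ⟨p⟩ := (𝒱.tree k hk hkd).2.2.2 A hA T hT
  exact ⟨p.snd, (p.adj_snd (p.not_nil_of_ne fun h => hj (h ▸ hjT))).2⟩

theorem exists_mem_V_mem (hk : 1 ≤ k) (hkd : k < Fintype.card α) (j : α) :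
    ∃ A ∈ 𝒱.V k, j ∈ A := by
  induction k, hk using Nat.le_induction generalizing j with
  | base => exact ⟨{j}, 𝒱.hV1 ▸ mem_image_of_mem _ (mem_univ j), mem_singleton_self j⟩
  | succ k hk ih =>
    obtain ⟨A, hA, hjA⟩ := ih (by omega) j
    obtain ⟨X, hX⟩ := exists_mk_mem_E_of_cover hk (by omega) (ih (by omega)) hA
    exact ⟨A ∪ X, mem_V_succ hk hX, mem_union_left X hjA⟩

theorem exists_mk_mem_E (hk : 1 ≤ k) (hkd : k < Fintype.card α) (hA : A ∈ 𝒱.V k) :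
    ∃ X, s(A, X) ∈ 𝒱.E k :=
  exists_mk_mem_E_of_cover hk hkd (exists_mem_V_mem hk hkd) hA

theorem exists_insert_mem_V_succ (hk : 1 ≤ k) (hkd : k < Fintype.card α) (hS : A ∈ 𝒱.V k) :
    ∃ j ∉ A, ∃ a ∈ A, ∃ e ∈ 𝒱.E k, condPair e = {j, a} ∧ condSet e = A.erase a ∧
      insert j A ∈ 𝒱.V (k + 1) := by
  obtain ⟨X, he⟩ := exists_mk_mem_E hk hkd hS
  have hU : A ∪ X ∈ 𝒱.V (k + 1) := mem_V_succ hk he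
  obtain ⟨j, a, hj, ha⟩ := exists_sdiff_eq_singleton_of_card_union (card_of_mem_V hk hS)
    (card_of_mem_V hk (mem_V_of_mem_E he (Sym2.mem_mk_right A X)))
    (card_of_mem_V (by omega) hU)
  have hjA : j ∉ A := (mem_sdiff.mp (hj ▸ mem_singleton_self j)).2
  have haA : a ∈ A := (mem_sdiff.mp (ha ▸ mem_singleton_self a)).1
  refine ⟨j, hjA, a, haA, s(A, X), he, ?_, ?_, ?_⟩
  · rw [condPair_mk, symmDiff_def, sup_eq_union, hj, ha, union_comm, ← insert_eq]
  · rw [condSet_mk, ← inf_eq_inter, ← sdiff_sdiff_right_self, ha, sdiff_singleton_eq_erase]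
  · rwa [insert_eq, union_comm, ← hj, union_sdiff_self_eq_union]

/-- Clause `m` of `Compatible`, for a sequence `f 0, f 1, …` of indices. -/
def CompatibleAt (𝒱 : RegularVine α) (f : ℕ → α) (m : ℕ) : Prop :=
  ∃ r < m, ∃ e ∈ 𝒱.E m, condPair e = {f m, f r} ∧ condSet e = ((range m).image f).erase (f r)

theorem CompatibleAt.congr {f g : ℕ → α} {m : ℕ} (hfg : ∀ i ≤ m, f i = g i)
    (hf : 𝒱.CompatibleAt f m) : 𝒱.CompatibleAt g m := by
  obtain ⟨r, hr, e, he, hpair, hset⟩ := hf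
  have himage : (range m).image f = (range m).image g :=
    image_congr fun i hi => hfg i (mem_range.mp hi).le
  refine ⟨r, hr, e, he, ?_, ?_⟩
  · rwa [← hfg m le_rfl, ← hfg r hr.le]
  · rwa [← himage, ← hfg r hr.le]

theorem exists_seq_compatibleAt (i₁ : α) {n : ℕ} (hn : 1 ≤ n) (hnd : n ≤ Fintype.card α) :
    ∃ f : ℕ → α, f 0 = i₁ ∧ (range n).image f ∈ 𝒱.V n ∧
      ∀ m, 1 ≤ m → m < n → 𝒱.CompatibleAt f m := by
  induction n, hn using Nat.le_induction with
  | base =>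
    refine ⟨fun _ => i₁, rfl, ?_, fun m hm hm1 => by omega⟩
    rw [𝒱.hV1, range_one, image_singleton]
    exact mem_image_of_mem _ (mem_univ i₁)
  | succ n hn ih =>
    obtain ⟨f, hf0, hfV, hf⟩ := ih (by omega)
    obtain ⟨j, -, a, ha, e, he, hpair, hset, hjV⟩ := exists_insert_mem_V_succ hn (by omega) hfV
    obtain ⟨r, hr, rfl⟩ := mem_image.mp ha
    have hr : r < n := mem_range.mp hr
    have hagree : ∀ i < n, Function.update f n j i = f i := fun i hi =>
      Function.update_of_ne hi.ne _ _
    have himage : (range n).image (Function.update f n j) = (range n).image f :=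
      image_congr fun i hi => hagree i (mem_range.mp hi)
    refine ⟨Function.update f n j, by rw [hagree 0 hn, hf0], ?_, fun m hm hmn => ?_⟩
    · rwa [range_add_one, image_insert, himage, Function.update_self]
    rcases (Nat.lt_succ_iff_lt_or_eq.mp hmn) with hmn | rfl
    · exact (hf m hm hmn).congr fun i hi => (hagree i (by omega)).symm
    · refine ⟨r, hr, e, he, ?_, ?_⟩
      · rwa [Function.update_self, hagree r hr]
      · rwa [himage, hagree r hr]

end RegularVine

theorem Compatible.of_compatibleAt {d : ℕ} {𝒱 : RegularVine (Fin d)} {f : ℕ → Fin d}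
    (hf : ∀ m, 1 ≤ m → m < d → 𝒱.CompatibleAt f m) : Compatible 𝒱 (fun i => f i) := by
  intro k hk
  obtain ⟨r, hr, e, he, hpair, hset⟩ := hf k hk k.isLt
  have himage : (univ.filter (· < k)).image (fun i : Fin d => f i) = (range k).image f := by
    ext x
    simp only [mem_image, mem_filter, mem_univ, true_and, mem_range]
    constructor
    · rintro ⟨i, hi, rfl⟩
      exact ⟨i, hi, rfl⟩
    · rintro ⟨i, hi, rfl⟩
      exact ⟨⟨i, hi.trans k.isLt⟩, hi, rfl⟩
  exact ⟨⟨r, hr.trans k.isLt⟩, hr, e, he, hpair, himage ▸ hset⟩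

theorem exists_compatible_of_start {d : ℕ} (𝒱 : RegularVine (Fin d)) (i₁ : Fin d) :
    ∃ σ : Fin d → Fin d, Function.Bijective σ ∧ σ ⟨0, i₁.pos⟩ = i₁ ∧ Compatible 𝒱 σ := by
  obtain ⟨f, hf0, hfV, hf⟩ := 𝒱.exists_seq_compatibleAt i₁ i₁.pos (by simp)
  have hinj : Set.InjOn f (range d) := by
    rw [← card_image_iff, 𝒱.card_of_mem_V i₁.pos hfV, card_range]
  refine ⟨fun i => f i, ?_, hf0, Compatible.of_compatibleAt hf⟩
  refine Finite.injective_iff_bijective.mp fun x y hxy => Fin.ext ?_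
  exact hinj (by simp) (by simp) hxy

/-- For any `d`-dimensional regular vine and any starting index `i₁`, there exists a
permutation `(i₁, i₂, …, i_d)` compatible with the vine; consequently every vine
admits at least `d` compatible permutations. -/
theorem exists_compatible_permutation {d : ℕ} (𝒱 : RegularVine (Fin d)) :
    (∀ i₁ : Fin d, ∃ σ : Fin d → Fin d, Function.Bijective σ ∧
      σ ⟨0, i₁.pos⟩ = i₁ ∧ Compatible 𝒱 σ) ∧
    d ≤ {σ : Fin d → Fin d | Function.Bijective σ ∧ Compatible 𝒱 σ}.ncard := by
  refine ⟨exists_compatible_of_start 𝒱, ?_⟩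
  choose σ hbij hstart hcompat using exists_compatible_of_start 𝒱
  have hinj : Function.Injective σ := fun i j hij => by
    rw [← hstart i, ← hstart j, hij]
  calc d = (Set.univ : Set (Fin d)).ncard := by simp
    _ ≤ _ := Set.ncard_le_ncard_of_injOn σ
      (fun i _ => Set.mem_ofPred.mpr ⟨hbij i, hcompat i⟩) hinj.injOn
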